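/- Let U, W ∈ B(H) with W invertible and U unitary, and suppose there exist a nonzero closed subspace K and N ∈ ℕ with U^n(K) ⊥ K for all n ≥ N. If m(W) > 1, then the set of periodic elements of the cosine sequence {C^{(n)}_{U,W}} is not dense in B_0(H); in particular {C^{(n)}_{U,W}} is not chaotic on B_0(H). -/

import Mathlib

/-!
Since `m(W) > 1`, `‖T^n G‖ ≥ m(W)^n ‖G‖` grows geometrically, while `W⁻¹` and `U⁻¹` are
contractions, so `‖S^n G‖ ≤ ‖G‖`. A periodic point `G` satisfies `T^n G = 2G - S^n G` for
infinitely many `n`, hence `‖T^n G‖ ≤ 3‖G‖`, which forces `G = 0`. So `0` is the only periodic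
point, and it is not dense because a nonzero rank-one operator is compact.
-/

set_option linter.unusedSectionVars false
set_option linter.unusedVariables false

open scoped InnerProductSpace
open Filter

noncomputable section

variable {H : Type*} [NormedAddCommGroup H] [InnerProductSpace ℂ H] [CompleteSpace H]

/-- `m(F) := inf_{‖x‖=1} ‖F x‖`. -/
def mop (F : H →L[ℂ] H) : ℝ := ⨅ x : {x : H // ‖x‖ = 1}, ‖F x‖

/-- The orthogonal projection onto a finite-dimensional subspace, as an endomorphism of `H`. -/
def projCLM (K : Submodule ℂ H) (hK : FiniteDimensional ℂ K) : H →L[ℂ] H :=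
  letI := hK
  letI : CompleteSpace K := FiniteDimensional.complete ℂ K
  K.subtypeL ∘L K.orthogonalProjection

/-- `L_m`, the span of the first `m` basis vectors. -/
def Lspan (b : HilbertBasis ℕ ℂ H) (m : ℕ) : Submodule ℂ H :=
  Submodule.span ℂ (b '' Set.Iio m)

theorem Lspan_fd (b : HilbertBasis ℕ ℂ H) (m : ℕ) : FiniteDimensional ℂ (Lspan b m) :=
  FiniteDimensional.span_of_finite ℂ ((Set.finite_Iio m).image b)

/-- `P_m`, the orthogonal projection onto `L_m`. -/
def Pproj (b : HilbertBasis ℕ ℂ H) (m : ℕ) : H →L[ℂ] H := projCLM (Lspan b m) (Lspan_fd b m)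

/-- `T_{U,W}^n (F) = W^n F U^n`. -/
def Tpow (W : H ≃L[ℂ] H) (U : H →L[ℂ] H) (n : ℕ) (F : H →L[ℂ] H) : H →L[ℂ] H :=
  ((W : H →L[ℂ] H) ^ n) ∘L F ∘L (U ^ n)

/-- `S_{U,W}^n (F) = W^{-n} F U^{-n}` (here `U⁻¹ = star U` since `U` is unitary). -/
def Spow (W : H ≃L[ℂ] H) (U : H →L[ℂ] H) (n : ℕ) (F : H →L[ℂ] H) : H →L[ℂ] H :=
  ((W.symm : H →L[ℂ] H) ^ n) ∘L F ∘L ((star U) ^ n)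

/-- The cosine operator function `C^{(n)} = (1/2)(T^n + S^n)`. -/
def Cpow (W : H ≃L[ℂ] H) (U : H →L[ℂ] H) (n : ℕ) (F : H →L[ℂ] H) : H →L[ℂ] H :=
  (2 : ℂ)⁻¹ • (Tpow W U n F + Spow W U n F)

/-- `B₀(H)`, the compact operators on `H`, as a submodule of `B(H)`. -/
def B0 : Submodule ℂ (H →L[ℂ] H) := compactOperator (RingHom.id ℂ) H H

theorem Tpow_mem (W : H ≃L[ℂ] H) (U : H →L[ℂ] H) (n : ℕ) (F : H →L[ℂ] H)
    (hF : IsCompactOperator F) : Tpow W U n F ∈ B0 (H := H) :=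
  (hF.comp_clm (U ^ n)).clm_comp ((W : H →L[ℂ] H) ^ n)

theorem Spow_mem (W : H ≃L[ℂ] H) (U : H →L[ℂ] H) (n : ℕ) (F : H →L[ℂ] H)
    (hF : IsCompactOperator F) : Spow W U n F ∈ B0 (H := H) :=
  (hF.comp_clm ((star U) ^ n)).clm_comp ((W.symm : H →L[ℂ] H) ^ n)

theorem Cpow_mem (W : H ≃L[ℂ] H) (U : H →L[ℂ] H) (n : ℕ) (F : H →L[ℂ] H)
    (hF : IsCompactOperator F) : Cpow W U n F ∈ B0 (H := H) :=
  Submodule.smul_mem _ _ (Submodule.add_mem _ (Tpow_mem W U n F hF) (Spow_mem W U n F hF))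

/-- `T^n` as a map of `B₀(H)`. -/
def TB0 (W : H ≃L[ℂ] H) (U : H →L[ℂ] H) (n : ℕ) (F : B0 (H := H)) : B0 (H := H) :=
  ⟨Tpow W U n F.1, Tpow_mem W U n F.1 F.2⟩

/-- `C^{(n)}` as a map of `B₀(H)`. -/
def CB0 (W : H ≃L[ℂ] H) (U : H →L[ℂ] H) (n : ℕ) (F : B0 (H := H)) : B0 (H := H) :=
  ⟨Cpow W U n F.1, Cpow_mem W U n F.1 F.2⟩

/-- The absolute value `|G| = sqrt(G* G)` of an operator. -/
def absop (G : H →L[ℂ] H) : H →L[ℂ] H := CFC.sqrt (star G * G)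

/-- The trace computed in the orthonormal basis `b`. -/
def trB (b : HilbertBasis ℕ ℂ H) (A : H →L[ℂ] H) : ℂ := ∑' j, ⟪b j, A (b j)⟫_ℂ

/-- `G` is trace class (w.r.t. the basis `b`): the trace of `|G|` converges. -/
def IsTraceClassB (b : HilbertBasis ℕ ℂ H) (G : H →L[ℂ] H) : Prop :=
  Summable fun j => ⟪b j, absop G (b j)⟫_ℂ

/-- The trace norm `‖G‖₁ = tr |G|` computed in the basis `b`. -/
def traceNormB (b : HilbertBasis ℕ ℂ H) (G : H →L[ℂ] H) : ℝ :=
  ∑' j, (⟪b j, absop G (b j)⟫_ℂ).re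

/-- `L_n` for a basis indexed by positive integers. -/
def LspanP (b : HilbertBasis ℕ+ ℂ H) (n : ℕ) : Submodule ℂ H :=
  Submodule.span ℂ (b '' {j : ℕ+ | (j : ℕ) ≤ n})

theorem LspanP_fd (b : HilbertBasis ℕ+ ℂ H) (n : ℕ) : FiniteDimensional ℂ (LspanP b n) := by
  refine FiniteDimensional.span_of_finite ℂ (Set.Finite.image b ?_)
  have : {j : ℕ+ | (j : ℕ) ≤ n} = ((↑) : ℕ+ → ℕ) ⁻¹' Set.Iic n := rfl
  rw [this]
  exact (Set.finite_Iic n).preimage (Set.injOn_of_injective PNat.coe_injective)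

/-- `P_n` for a basis indexed by positive integers. -/
def PprojP (b : HilbertBasis ℕ+ ℂ H) (n : ℕ) : H →L[ℂ] H := projCLM (LspanP b n) (LspanP_fd b n)

theorem mop_nonneg (A : H →L[ℂ] H) : 0 ≤ mop A :=
  Real.iInf_nonneg fun _ => norm_nonneg _

theorem mop_mul_norm_le (A : H →L[ℂ] H) (x : H) : mop A * ‖x‖ ≤ ‖A x‖ := by
  rcases eq_or_ne x 0 with rfl | hx
  · simp
  have hx' : 0 < ‖x‖ := norm_pos_iff.mpr hx
  have hunit : ‖(‖x‖⁻¹ : ℂ) • x‖ = 1 := by simp [norm_smul, hx'.ne']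
  have hbdd : BddBelow (Set.range fun y : {y : H // ‖y‖ = 1} => ‖A y‖) :=
    ⟨0, by rintro _ ⟨y, rfl⟩; exact norm_nonneg _⟩
  have hle : mop A ≤ ‖x‖⁻¹ * ‖A x‖ :=
    (ciInf_le hbdd ⟨_, hunit⟩).trans_eq (by simp [norm_smul])
  calc mop A * ‖x‖ ≤ ‖x‖⁻¹ * ‖A x‖ * ‖x‖ := by gcongr
    _ = ‖A x‖ := by field_simp

theorem mop_pow_mul_norm_le (A : H →L[ℂ] H) (n : ℕ) (x : H) :
    mop A ^ n * ‖x‖ ≤ ‖(A ^ n) x‖ := by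
  induction n with
  | zero => simp
  | succ n ih =>
    calc mop A ^ (n + 1) * ‖x‖ = mop A * (mop A ^ n * ‖x‖) := by ring
      _ ≤ mop A * ‖(A ^ n) x‖ := by gcongr; exact mop_nonneg A
      _ ≤ ‖A ((A ^ n) x)‖ := mop_mul_norm_le A _
      _ = ‖(A ^ (n + 1)) x‖ := by rw [pow_succ']; rfl

theorem norm_symm_apply_le_of_one_le_mop (W : H ≃L[ℂ] H) (hW : 1 ≤ mop (W : H →L[ℂ] H))
    (x : H) : ‖W.symm x‖ ≤ ‖x‖ := by
  have h := mop_mul_norm_le (W : H →L[ℂ] H) (W.symm x)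
  rw [ContinuousLinearEquiv.coe_coe, W.apply_symm_apply] at h
  nlinarith [norm_nonneg (W.symm x)]

theorem ContinuousLinearMap.norm_pow_apply_le {𝕜 E : Type*} [NormedField 𝕜]
    [SeminormedAddCommGroup E] [NormedSpace 𝕜 E] (A : E →L[𝕜] E) (hA : ∀ x, ‖A x‖ ≤ ‖x‖)
    (n : ℕ) (x : E) : ‖(A ^ n) x‖ ≤ ‖x‖ := by
  induction n with
  | zero => simp
  | succ n ih => rw [pow_succ']; exact (hA _).trans ih

section CosineFunction

variable (W : H ≃L[ℂ] H) {U : H →L[ℂ] H} (hU : U ∈ unitary (H →L[ℂ] H))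
include hU

theorem norm_Spow_le (hW : 1 ≤ mop (W : H →L[ℂ] H)) (n : ℕ) (G : H →L[ℂ] H) :
    ‖Spow W U n G‖ ≤ ‖G‖ := by
  refine ContinuousLinearMap.opNorm_le_bound _ (norm_nonneg G) fun y => ?_
  calc ‖((W.symm : H →L[ℂ] H) ^ n) (G ((star U ^ n) y))‖
      ≤ ‖G ((star U ^ n) y)‖ :=
        ContinuousLinearMap.norm_pow_apply_le _ (norm_symm_apply_le_of_one_le_mop W hW) n _
    _ ≤ ‖G‖ * ‖(star U ^ n) y‖ := G.le_opNorm _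
    _ = ‖G‖ * ‖y‖ := by
        rw [ContinuousLinearMap.norm_map_of_mem_unitary (pow_mem (Unitary.star_mem hU) n)]

theorem mop_pow_mul_norm_le_norm_Tpow (n : ℕ) (G : H →L[ℂ] H) :
    mop (W : H →L[ℂ] H) ^ n * ‖G‖ ≤ ‖Tpow W U n G‖ := by
  set c := mop (W : H →L[ℂ] H) ^ n
  have hc : 0 ≤ c := pow_nonneg (mop_nonneg _) n
  have hUU : ∀ y, (U ^ n) ((star U ^ n) y) = y := fun y => by
    have := DFunLike.congr_fun (Unitary.mul_star_self_of_mem (pow_mem hU n)) y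
    rw [star_pow] at this
    exact this
  suffices ‖(c : ℂ) • G‖ ≤ ‖Tpow W U n G‖ by
    simpa [norm_smul, abs_of_nonneg hc] using this
  refine ContinuousLinearMap.opNorm_le_bound _ (norm_nonneg _) fun y => ?_
  calc ‖((c : ℂ) • G) y‖ = c * ‖G y‖ := by simp [norm_smul, abs_of_nonneg hc]
    _ ≤ ‖Tpow W U n G ((star U ^ n) y)‖ := by
        simpa only [Tpow, ContinuousLinearMap.comp_apply, hUU] using mop_pow_mul_norm_le _ n (G y)
    _ ≤ ‖Tpow W U n G‖ * ‖(star U ^ n) y‖ := (Tpow W U n G).le_opNorm _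
    _ = ‖Tpow W U n G‖ * ‖y‖ := by
        rw [ContinuousLinearMap.norm_map_of_mem_unitary (pow_mem (Unitary.star_mem hU) n)]

theorem norm_Tpow_le_of_Cpow_eq (hW : 1 ≤ mop (W : H →L[ℂ] H)) {n : ℕ} {G : H →L[ℂ] H}
    (hG : Cpow W U n G = G) : ‖Tpow W U n G‖ ≤ 3 * ‖G‖ := by
  have hT : Tpow W U n G = (2 : ℂ) • G - Spow W U n G := by
    have h2 : (2 : ℂ) • Cpow W U n G = Tpow W U n G + Spow W U n G := by
      rw [Cpow, smul_smul]
      norm_num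
    rw [eq_sub_iff_add_eq, ← h2, hG]
  calc ‖Tpow W U n G‖ ≤ ‖(2 : ℂ) • G‖ + ‖Spow W U n G‖ := hT ▸ norm_sub_le _ _
    _ ≤ 2 * ‖G‖ + ‖G‖ := by
        rw [norm_smul]
        gcongr
        · norm_num
        · exact norm_Spow_le W hU hW n G
    _ = 3 * ‖G‖ := by ring

theorem eq_zero_of_Cpow_periodic (hW : 1 < mop (W : H →L[ℂ] H)) {G : H →L[ℂ] H} {N' : ℕ}
    (hN' : 0 < N') (hG : ∀ k : ℕ, Cpow W U (k * N') G = G) : G = 0 := by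
  by_contra hG0
  have hGpos : 0 < ‖G‖ := norm_pos_iff.mpr hG0
  have hbound : ∀ k : ℕ, (mop (W : H →L[ℂ] H) ^ N') ^ k ≤ 3 := fun k => by
    have := (mop_pow_mul_norm_le_norm_Tpow W hU (k * N') G).trans
      (norm_Tpow_le_of_Cpow_eq W hU hW.le (hG k))
    rw [mul_comm k, pow_mul] at this
    exact le_of_mul_le_mul_right this hGpos
  obtain ⟨k, hk⟩ := ((tendsto_pow_atTop_atTop_of_one_lt
    (one_lt_pow₀ hW hN'.ne')).eventually_gt_atTop 3).exists
  exact (hbound k).not_gt hk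

end CosineFunction

theorem exists_isCompactOperator_ne_zero [Nontrivial H] :
    ∃ F : H →L[ℂ] H, IsCompactOperator F ∧ F ≠ 0 := by
  obtain ⟨e, he⟩ := exists_ne (0 : H)
  refine ⟨ContinuousLinearMap.toSpanSingleton ℂ e ∘L innerSL ℂ e,
    (isCompactOperator_of_locallyCompactSpace_rng
      (ContinuousLinearMap.toSpanSingleton ℂ e)).comp_clm (innerSL ℂ e), fun hF => he ?_⟩
  simpa [he] using congrArg (fun F : H →L[ℂ] H => F e) hF

theorem stmt16_general (W : H ≃L[ℂ] H) (U : H →L[ℂ] H) (hU : U ∈ unitary (H →L[ℂ] H))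
    (K : Submodule ℂ H) (hKne : K ≠ ⊥)
    (hm : 1 < mop (W : H →L[ℂ] H)) :
    ¬ (∀ F : H →L[ℂ] H, IsCompactOperator F → ∀ ε > (0 : ℝ),
        ∃ G : H →L[ℂ] H, IsCompactOperator G ∧
          (∃ N' : ℕ, 0 < N' ∧ ∀ k : ℕ, Cpow W U (k * N') G = G) ∧ ‖F - G‖ < ε) := by
  intro hdense
  obtain ⟨x, -, hx⟩ := Submodule.exists_mem_ne_zero_of_ne_bot hKne
  have : Nontrivial H := ⟨⟨x, 0, hx⟩⟩
  obtain ⟨F, hFc, hF0⟩ := exists_isCompactOperator_ne_zero (H := H)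
  obtain ⟨G, -, ⟨N', hN', hG⟩, hFG⟩ := hdense F hFc ‖F‖ (norm_pos_iff.mpr hF0)
  rw [eq_zero_of_Cpow_periodic W hU hm hN' hG, sub_zero] at hFG
  exact hFG.false

/-- if `m(W) > 1` then the periodic elements of `{C^{(n)}}` are not
dense in `B₀(H)` (so `{C^{(n)}}` is not chaotic). -/
theorem stmt16 (W : H ≃L[ℂ] H) (U : H →L[ℂ] H) (hU : U ∈ unitary (H →L[ℂ] H))
    (K : Submodule ℂ H) (hKc : IsClosed (K : Set H)) (hKne : K ≠ ⊥) (N : ℕ)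
    (horth : ∀ n ≥ N, ∀ x ∈ K, ∀ y ∈ K, ⟪(U ^ n) x, y⟫_ℂ = 0)
    (hm : 1 < mop (W : H →L[ℂ] H)) :
    ¬ (∀ F : H →L[ℂ] H, IsCompactOperator F → ∀ ε > (0 : ℝ),
        ∃ G : H →L[ℂ] H, IsCompactOperator G ∧
          (∃ N' : ℕ, 0 < N' ∧ ∀ k : ℕ, Cpow W U (k * N') G = G) ∧ ‖F - G‖ < ε) :=
  stmt16_general W U hU K hKne hm

end
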